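/- arXiv:math-ph/0204009 — 2 statements merged into one kernel-verified Lean document; each statement's English description precedes it below -/
import Mathlib

section
/- If P_{Ψ_N} is the rank-one orthogonal projector onto the span of a Slater determinant Ψ_N ∈ A_N built from N orthonormal vectors of H, then for every n ≤ N its n-th partial trace satisfies (P_{Ψ_N})_{:n} = (N^n (N−n)!/N!) · ((P_{Ψ_N})_{:1})^{⊗n} · Σ_n, where Σ_n = ∑_{π∈Π_n} sgn(π)U_π. -/
noncomputable section

open ContinuousLinearMap

local notation "⟪" x ", " y "⟫" => @inner ℂ _ _ x y

/-!
Pairing `Ψ_N` with a product vector gives a determinant, `⟪Ψ_N, ⊗ f⟫ = det [⟪e_i, f_j⟫] / √N!`.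
In a matrix element of the partial trace, Parseval's identity in each traced-out factor turns
the sum over the Hilbert basis into inner products `⟪e_{σ' k}, e_{σ k}⟫` of the tail, so by
orthonormality only pairs of permutations agreeing on the last `N - n` slots survive. What is
left depends on `σ` only through its restriction `κ` to the first `n` slots; each injective `κ`
comes from `(N - n)!` permutations, and the sum over `κ` is the Cauchy–Binet expansion of
`det [⟪y_i, Q x_j⟫]` with `Q = ∑_k P_{e_k}`. For `n = 1` this reads `(P_Ψ)_{:1} = Q / N`, and
the antisymmetrised `n`-th tensor power of `Q / N` has matrix elements `N^{-n} det [⟪y_i, Q x_j⟫]`.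
-/

open scoped Matrix

namespace Equiv.Perm

variable {α β : Type*}

theorem exists_comp_eq [Finite β] {ι κ : α → β} (hι : Function.Injective ι)
    (hκ : Function.Injective κ) : ∃ σ : Perm β, ⇑σ ∘ ι = κ := by
  classical
  let e := (Equiv.ofInjective ι hι).symm.trans (Equiv.ofInjective κ hκ)
  exact ⟨e.extendSubtype, funext fun a => by
    simp [e, Equiv.extendSubtype_apply_of_mem _ _ (Set.mem_range_self a)]⟩

variable [Fintype α] [Fintype β] [DecidableEq β]

theorem card_comp_eq {ι κ : α → β} (hι : Function.Injective ι) (hκ : Function.Injective κ) :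
    Fintype.card {σ : Perm β // ⇑σ ∘ ι = κ} = (Fintype.card β - Fintype.card α).factorial := by
  obtain ⟨σ₀, rfl⟩ := exists_comp_eq hι hκ
  have hfix : {σ : Perm β // ⇑σ ∘ ι = ⇑σ₀ ∘ ι} ≃
      {σ : Perm β // ∀ b, ¬ b ∉ Set.range ι → σ b = b} :=
    (Equiv.mulLeft σ₀⁻¹).subtypeEquiv fun σ => by
      simp [funext_iff, Equiv.symm_apply_eq]
  rw [Fintype.card_congr (hfix.trans (Perm.subtypeEquivSubtypePerm _).symm), Fintype.card_perm,
    Fintype.card_subtype_compl, Set.card_range_of_injective hι]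

theorem sum_comp_eq_factorial_smul_sum [DecidableEq α] {M : Type*} [AddCommMonoid M]
    {ι : α → β} (hι : Function.Injective ι) (F : (α → β) → M)
    (hF : ∀ κ, ¬ Function.Injective κ → F κ = 0) :
    ∑ σ : Perm β, F (⇑σ ∘ ι) = (Fintype.card β - Fintype.card α).factorial • ∑ κ, F κ := by
  rw [← Fintype.sum_fiberwise (fun σ : Perm β => ⇑σ ∘ ι), Finset.smul_sum]
  refine Fintype.sum_congr _ _ fun κ => ?_
  rw [Fintype.sum_congr _ (fun _ => F κ) fun σ => congrArg F σ.prop, Finset.sum_const,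
    Finset.card_univ]
  by_cases hκ : Function.Injective κ
  · rw [card_comp_eq hι hκ]
  · simp [hF κ hκ]

theorem sum_eq_sum_sumCongr [DecidableEq α] {M : Type*} [AddCommMonoid M]
    (g : Perm (α ⊕ β) → M) (hg : ∀ τ t, τ (Sum.inr t) ≠ Sum.inr t → g τ = 0) :
    ∑ τ, g τ = ∑ ρ : Perm α, g (sumCongr ρ 1) := by
  refine (Fintype.sum_of_injective (fun ρ => sumCongr ρ 1) (fun ρ ρ' h => ?_) _ g
    (fun τ hτ => ?_) fun _ => rfl).symm
  · ext a
    simpa using congr($h (Sum.inl a))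
  · by_contra hne
    have hfix : ∀ t, τ (Sum.inr t) = Sum.inr t := fun t => by_contra fun h => hne (hg τ t h)
    have hmaps : Set.MapsTo τ (Set.range Sum.inl) (Set.range Sum.inl) := by
      rintro _ ⟨a, rfl⟩
      cases h : τ (Sum.inl a) with
      | inl a' => exact ⟨a', rfl⟩
      | inr t => exact absurd (τ.injective (h.trans (hfix t).symm)) Sum.inl_ne_inr
    obtain ⟨⟨ρ, ρ'⟩, hρ⟩ := mem_sumCongrHom_range_of_perm_mapsTo_inl hmaps
    refine hτ ⟨ρ, Equiv.ext ?_⟩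
    rintro (a | t)
    · simp [← hρ]
    · simp [hfix t]

end Equiv.Perm

/-- A form of the Cauchy–Binet formula. -/
theorem Matrix.det_mul_eq_sum_prod_mul_det_submatrix {m k R : Type*} [Fintype m]
    [DecidableEq m] [Fintype k] [CommRing R] (A : Matrix m k R) (B : Matrix k m R) :
    (A * B).det = ∑ κ : m → k, (∏ i, A i (κ i)) * (B.submatrix κ id).det := by
  have hrows : A * B = fun i => ∑ l, A i l • B l := by
    ext i j
    simp [Matrix.mul_apply, Finset.sum_apply]
  have hmul := (Matrix.detRowAlternating : (m → R) [⋀^m]→ₗ[R] R).toMultilinearMap.map_sum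
    fun i l => A i l • B l
  simp only [AlternatingMap.coe_multilinearMap, MultilinearMap.map_smul_univ] at hmul
  rw [Matrix.det, hrows, hmul]
  rfl

namespace Complex

theorem hasSum_mul {ι κ : Type*} {f : ι → ℂ} {g : κ → ℂ} {s t : ℂ}
    (hf : HasSum f s) (hg : HasSum g t) :
    HasSum (fun x : ι × κ => f x.1 * g x.2) (s * t) :=
  hf.mul hg (summable_mul_of_summable_norm (summable_norm_iff.mpr hf.summable)
    (summable_norm_iff.mpr hg.summable))

theorem hasSum_fin_prod {J : Type*} {k : ℕ} (f : Fin k → J → ℂ) (a : Fin k → ℂ)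
    (h : ∀ t, HasSum (f t) (a t)) :
    HasSum (fun z : Fin k → J => ∏ t, f t (z t)) (∏ t, a t) := by
  induction k with
  | zero => simp
  | succ k ih =>
    have hpair := hasSum_mul (h 0) (ih (fun t => f t.succ) (fun t => a t.succ) fun t => h t.succ)
    simpa [Fin.prod_univ_succ, Function.comp_def, Fin.consEquiv, Fin.tail] using
      (Fin.consEquiv fun _ => J).symm.hasSum_iff.mpr hpair

theorem hasSum_fintype_prod {J β : Type*} [Fintype β] (f : β → J → ℂ) (a : β → ℂ)
    (h : ∀ t, HasSum (f t) (a t)) :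
    HasSum (fun z : β → J => ∏ t, f t (z t)) (∏ t, a t) := by
  let e := Fintype.equivFin β
  have hfin := hasSum_fin_prod (fun t => f (e.symm t)) (fun t => a (e.symm t)) fun t => h _
  convert (e.arrowCongr (Equiv.refl J)).hasSum_iff.mpr hfin using 1
  · funext z
    exact (e.symm.prod_comp fun t => f t (z t)).symm
  · exact (e.symm.prod_comp a).symm

end Complex

theorem HilbertBasis.hasSum_prod_inner_mul_inner {H J β : Type*} [NormedAddCommGroup H]
    [InnerProductSpace ℂ H] [Fintype β] (b : HilbertBasis J ℂ H) (u v : β → H) :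
    HasSum (fun z : β → J => ∏ t, ⟪u t, b (z t)⟫ * ⟪b (z t), v t⟫) (∏ t, ⟪u t, v t⟫) :=
  Complex.hasSum_fintype_prod (fun t j => ⟪u t, b j⟫ * ⟪b j, v t⟫) _
    fun t => b.hasSum_inner_mul_inner (u t) (v t)

section CrossGram

open Equiv

variable {H : Type*} [NormedAddCommGroup H] [InnerProductSpace ℂ H]

def crossGram {ι κ : Type*} (u : ι → H) (v : κ → H) : Matrix ι κ ℂ :=
  Matrix.of fun i j => ⟪u i, v j⟫

@[simp]
theorem crossGram_apply {ι κ : Type*} (u : ι → H) (v : κ → H) (i : ι) (j : κ) :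
    crossGram u v i j = ⟪u i, v j⟫ := rfl

variable {α β : Type*} [Fintype α] [DecidableEq α] [Fintype β] [DecidableEq β]

theorem det_crossGram_sumElim (e : α ⊕ β → H) (w : α → H) (g : β → H) :
    (crossGram e (Sum.elim w g)).det = ∑ σ : Perm (α ⊕ β),
      ((Perm.sign σ : ℤ) : ℂ) * ((∏ i, ⟪e (σ (.inl i)), w i⟫) * ∏ t, ⟪e (σ (.inr t)), g t⟫) := by
  simp [Matrix.det_apply', Fintype.prod_sum_type]

theorem Orthonormal.sum_sign_mul_prod_inner_eq_sign_mul_det {e : α ⊕ β → H}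
    (he : Orthonormal ℂ e) (x : α → H) (σ : Perm (α ⊕ β)) :
    ∑ σ' : Perm (α ⊕ β), ((Perm.sign σ' : ℤ) : ℂ) *
        ((∏ i, ⟪e (σ' (.inl i)), x i⟫) * ∏ t, ⟪e (σ' (.inr t)), e (σ (.inr t))⟫) =
      ((Perm.sign σ : ℤ) : ℂ) * ((crossGram e x).submatrix (σ ∘ .inl) id).det := by
  have horth := orthonormal_iff_ite.mp he
  rw [← Fintype.sum_equiv (Equiv.mulLeft σ) (fun τ => _) _ fun _ => rfl,
    Perm.sum_eq_sum_sumCongr]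
  · simp [Matrix.det_apply', Finset.mul_sum, he.1, Perm.sign_mul, mul_assoc]
  · intro τ t ht
    rw [Finset.prod_eq_zero (Finset.mem_univ t), mul_zero, mul_zero]
    simpa [horth] using ht

theorem Orthonormal.sum_sum_sign_mul_prod_inner_eq_factorial_mul_det {e : α ⊕ β → H}
    (he : Orthonormal ℂ e) (y x : α → H) :
    ∑ σ : Perm (α ⊕ β), ∑ σ' : Perm (α ⊕ β),
      (((Perm.sign σ : ℤ) : ℂ) * ∏ i, ⟪y i, e (σ (.inl i))⟫) *
        (((Perm.sign σ' : ℤ) : ℂ) *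
          ((∏ i, ⟪e (σ' (.inl i)), x i⟫) * ∏ t, ⟪e (σ' (.inr t)), e (σ (.inr t))⟫)) =
      (Fintype.card β).factorial * ((crossGram e y)ᴴ * crossGram e x).det := by
  let F : (α → α ⊕ β) → ℂ := fun κ =>
    (∏ i, ⟪y i, e (κ i)⟫) * ((crossGram e x).submatrix κ id).det
  have hF : ∀ κ, ¬ Function.Injective κ → F κ = 0 := fun κ hκ => by
    obtain ⟨i, j, hij, hne⟩ := Function.not_injective_iff.mp hκ
    have hrows : (crossGram e x).submatrix κ id i = (crossGram e x).submatrix κ id j := by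
      ext; simp [hij]
    simp only [F, Matrix.det_zero_of_row_eq hne hrows, mul_zero]
  calc _ = ∑ σ : Perm (α ⊕ β), F (σ ∘ .inl) := by
        refine Fintype.sum_congr _ _ fun σ => ?_
        rw [← Finset.mul_sum, he.sum_sign_mul_prod_inner_eq_sign_mul_det]
        have hsq : ((Perm.sign σ : ℤ) : ℂ) * (Perm.sign σ : ℤ) = 1 := by
          rw [← Int.cast_mul, ← Units.val_mul, Int.units_mul_self, Units.val_one, Int.cast_one]
        rw [mul_mul_mul_comm, hsq, one_mul]
        rfl
    _ = (Fintype.card β).factorial * ∑ κ, F κ := by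
        rw [Perm.sum_comp_eq_factorial_smul_sum Sum.inl_injective F hF, nsmul_eq_mul]
        simp
    _ = _ := by
        rw [Matrix.det_mul_eq_sum_prod_mul_det_submatrix]
        simp [F]

theorem hasSum_conj_det_crossGram_mul_det_crossGram {J : Type*} (b : HilbertBasis J ℂ H)
    {e : α ⊕ β → H} (he : Orthonormal ℂ e) (y x : α → H) :
    HasSum (fun z : β → J => starRingEnd ℂ (crossGram e (Sum.elim y fun t => b (z t))).det *
        (crossGram e (Sum.elim x fun t => b (z t))).det)
      ((Fintype.card β).factorial * ((crossGram e y)ᴴ * crossGram e x).det) := by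
  let c : Perm (α ⊕ β) → Perm (α ⊕ β) → ℂ := fun σ σ' =>
    (((Perm.sign σ : ℤ) : ℂ) * ∏ i, ⟪y i, e (σ (.inl i))⟫) *
      (((Perm.sign σ' : ℤ) : ℂ) * ∏ i, ⟪e (σ' (.inl i)), x i⟫)
  have hterm : ∀ σ σ' : Perm (α ⊕ β), HasSum
      (fun z : β → J => c σ σ' * ∏ t, ⟪e (σ' (.inr t)), b (z t)⟫ * ⟪b (z t), e (σ (.inr t))⟫)
      (c σ σ' * ∏ t, ⟪e (σ' (.inr t)), e (σ (.inr t))⟫) := fun σ σ' =>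
    (b.hasSum_prod_inner_mul_inner _ _).mul_left _
  rw [← he.sum_sum_sign_mul_prod_inner_eq_factorial_mul_det]
  convert hasSum_sum fun σ _ => hasSum_sum fun σ' _ => hterm σ σ' using 1
  · funext z
    rw [det_crossGram_sumElim, det_crossGram_sumElim, map_sum, Finset.sum_mul_sum]
    refine Fintype.sum_congr _ _ fun σ => Fintype.sum_congr _ _ fun σ' => ?_
    simp only [c, map_mul, map_prod, map_intCast, inner_conj_symm, Finset.prod_mul_distrib]
    ring
  · exact Fintype.sum_congr _ _ fun σ => Fintype.sum_congr _ _ fun σ' => by ring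

end CrossGram

section Slater

variable {H HN J : Type*} [NormedAddCommGroup H] [InnerProductSpace ℂ H]
  [NormedAddCommGroup HN] [InnerProductSpace ℂ HN] {N : ℕ} {tpN : (Fin N → H) → HN}
  {e : Fin N → H}

def slaterDeterminant (tpN : (Fin N → H) → HN) (e : Fin N → H) : HN :=
  ((Real.sqrt N.factorial : ℝ) : ℂ)⁻¹ •
    ∑ π : Equiv.Perm (Fin N), ((Equiv.Perm.sign π : ℤ) : ℂ) • tpN (fun i => e (π⁻¹ i))

theorem inner_slaterDeterminant_tp
    (htpN_inner : ∀ x y : Fin N → H, ⟪tpN x, tpN y⟫ = ∏ i, ⟪x i, y i⟫) (f : Fin N → H) :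
    ⟪slaterDeterminant tpN e, tpN f⟫ =
      ((Real.sqrt N.factorial : ℝ) : ℂ)⁻¹ * (crossGram e f).det := by
  rw [slaterDeterminant, inner_smul_left, sum_inner, map_inv₀, Complex.conj_ofReal,
    Matrix.det_apply']
  congr 1
  refine Fintype.sum_equiv (Equiv.inv _) _ _ fun π => ?_
  simp [inner_smul_left, htpN_inner, map_intCast]

theorem inner_slaterProjector_tp
    (htpN_inner : ∀ x y : Fin N → H, ⟪tpN x, tpN y⟫ = ∏ i, ⟪x i, y i⟫) {PΨ : HN →L[ℂ] HN}
    (hPΨ : ∀ φ : HN, PΨ φ = ⟪slaterDeterminant tpN e, φ⟫ • slaterDeterminant tpN e)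
    (f g : Fin N → H) :
    ⟪PΨ (tpN f), tpN g⟫ =
      (N.factorial : ℂ)⁻¹ * (starRingEnd ℂ (crossGram e f).det * (crossGram e g).det) := by
  rw [hPΨ, inner_smul_left, inner_slaterDeterminant_tp htpN_inner,
    inner_slaterDeterminant_tp htpN_inner]
  have hsqrt : ((Real.sqrt N.factorial : ℝ) : ℂ)⁻¹ * ((Real.sqrt N.factorial : ℝ) : ℂ)⁻¹ =
      (N.factorial : ℂ)⁻¹ := by
    rw [← mul_inv, ← Complex.ofReal_mul, Real.mul_self_sqrt (Nat.cast_nonneg _)]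
    norm_num
  simp only [map_mul, map_inv₀, Complex.conj_ofReal]
  linear_combination (starRingEnd ℂ (crossGram e f).det * (crossGram e g).det) * hsqrt

theorem hasSum_inner_slaterProjector_append
    (htpN_inner : ∀ x y : Fin N → H, ⟪tpN x, tpN y⟫ = ∏ i, ⟪x i, y i⟫) (he : Orthonormal ℂ e)
    {PΨ : HN →L[ℂ] HN}
    (hPΨ : ∀ φ : HN, PΨ φ = ⟪slaterDeterminant tpN e, φ⟫ • slaterDeterminant tpN e)
    (b : HilbertBasis J ℂ H) {m : ℕ} (h : N = m + (N - m)) (y x : Fin m → H) :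
    HasSum (fun z : Fin (N - m) → J =>
        ⟪PΨ (tpN fun i => Fin.append y (fun t => b (z t)) (Fin.cast h i)),
          tpN fun i => Fin.append x (fun t => b (z t)) (Fin.cast h i)⟫)
      (((N - m).factorial / N.factorial : ℂ) * ((crossGram e y)ᴴ * crossGram e x).det) := by
  let E : Fin m ⊕ Fin (N - m) ≃ Fin N := finSumFinEquiv.trans (finCongr h.symm)
  have hdet : ∀ (w : Fin m → H) (z : Fin (N - m) → J),
      (crossGram e fun i => Fin.append w (fun t => b (z t)) (Fin.cast h i)).det =
        (crossGram (e ∘ E) (Sum.elim w fun t => b (z t))).det := fun w z => by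
    rw [← Matrix.det_submatrix_equiv_self E]
    congr 1
    ext a (c | c) <;> simp [E]
  have hgram :
      (crossGram (e ∘ E) y)ᴴ * crossGram (e ∘ E) x = (crossGram e y)ᴴ * crossGram e x := by
    ext i j
    simp only [Matrix.mul_apply, Matrix.conjTranspose_apply, crossGram_apply]
    exact Fintype.sum_equiv E _ _ fun _ => rfl
  have hsum := (hasSum_conj_det_crossGram_mul_det_crossGram b (he.comp E E.injective) y x).mul_left
    (N.factorial : ℂ)⁻¹
  rw [hgram, Fintype.card_fin, ← mul_assoc, ← div_eq_inv_mul] at hsum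
  exact hsum.congr_fun fun z => by rw [inner_slaterProjector_tp htpN_inner hPΨ, hdet, hdet]

theorem hasSum_inner_slaterProjector_cons
    (htpN_inner : ∀ x y : Fin N → H, ⟪tpN x, tpN y⟫ = ∏ i, ⟪x i, y i⟫) (he : Orthonormal ℂ e)
    {PΨ : HN →L[ℂ] HN}
    (hPΨ : ∀ φ : HN, PΨ φ = ⟪slaterDeterminant tpN e, φ⟫ • slaterDeterminant tpN e)
    (b : HilbertBasis J ℂ H) (h : N = N - 1 + 1) (w x : H) :
    HasSum (fun z : Fin (N - 1) → J =>
        ⟪PΨ (tpN fun i => Fin.cons (α := fun _ => H) w (fun t => b (z t)) (Fin.cast h i)),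
          tpN fun i => Fin.cons (α := fun _ => H) x (fun t => b (z t)) (Fin.cast h i)⟫)
      ((N : ℂ)⁻¹ * ∑ k, ⟪w, e k⟫ * ⟪e k, x⟫) := by
  have hsum := hasSum_inner_slaterProjector_append htpN_inner he hPΨ b (by omega) ![w] ![x]
  simp only [Fin.append_left_eq_cons, Function.comp_apply, Fin.cast_cast, Matrix.cons_val_zero]
    at hsum
  have hscalar : ((N - 1).factorial / N.factorial : ℂ) = (N : ℂ)⁻¹ := by
    rw [← Nat.mul_factorial_pred (by omega : N ≠ 0), Nat.cast_mul,
      div_mul_cancel_right₀ (Nat.cast_ne_zero.mpr (Nat.factorial_ne_zero _))]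
  rw [hscalar, Matrix.det_unique] at hsum
  simpa [Matrix.mul_apply] using hsum

end Slater

theorem ContinuousLinearMap.ext_inner_of_dense_span {E : Type*} [NormedAddCommGroup E]
    [InnerProductSpace ℂ E] {s : Set E} (hs : Dense (Submodule.span ℂ s : Set E))
    {T T' : E →L[ℂ] E} (h : ∀ v ∈ s, ∀ w ∈ s, ⟪T v, w⟫ = ⟪T' v, w⟫) : T = T' :=
  ext_on hs fun v hv => ext_inner_right ℂ fun w =>
    congr($(ext_on hs (f := innerSL ℂ (T v)) (g := innerSL ℂ (T' v)) fun w hw => h v hv w hw) w)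

theorem inner_comp_antisymmetrizer_tp {H Hn : Type*} [NormedAddCommGroup H]
    [InnerProductSpace ℂ H] [NormedAddCommGroup Hn] [InnerProductSpace ℂ Hn] {n : ℕ}
    {tpn : (Fin n → H) → Hn} (htpn_inner : ∀ x y : Fin n → H, ⟪tpn x, tpn y⟫ = ∏ i, ⟪x i, y i⟫)
    {Un : Equiv.Perm (Fin n) → (Hn →L[ℂ] Hn)}
    (hUn : ∀ (π : Equiv.Perm (Fin n)) (x : Fin n → H), Un π (tpn x) = tpn (fun i => x (π⁻¹ i)))
    {S : Hn →L[ℂ] Hn}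
    (hS : S = ∑ π : Equiv.Perm (Fin n), ((Equiv.Perm.sign π : ℤ) : ℂ) • Un π)
    {D : H → H} {Dn : Hn →L[ℂ] Hn} (hDn : ∀ x : Fin n → H, Dn (tpn x) = tpn fun i => D (x i))
    (y x : Fin n → H) :
    ⟪(Dn ∘L S) (tpn y), tpn x⟫ = (Matrix.of fun i j => ⟪D (y i), x j⟫).det := by
  rw [comp_apply, hS, sum_apply, map_sum, sum_inner, Matrix.det_apply']
  refine Fintype.sum_equiv (Equiv.inv _) _ _ fun π => ?_
  simp [inner_smul_left, hUn, hDn, htpn_inner, map_intCast]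

theorem slater_determinant_partial_trace_formula
    {H Hn HN : Type*}
    [NormedAddCommGroup H] [InnerProductSpace ℂ H]
    [NormedAddCommGroup Hn] [InnerProductSpace ℂ Hn]
    [NormedAddCommGroup HN] [InnerProductSpace ℂ HN]
    (n N : ℕ) (hn : 1 ≤ n) (hnN : n ≤ N)
    {J : Type} (b : HilbertBasis J ℂ H)
    (tpN : (Fin N → H) → HN)
    (htpN_inner : ∀ x y : Fin N → H, ⟪tpN x, tpN y⟫ = ∏ i, ⟪x i, y i⟫)
    (tpn : (Fin n → H) → Hn)
    (htpn_inner : ∀ x y : Fin n → H, ⟪tpn x, tpn y⟫ = ∏ i, ⟪x i, y i⟫)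
    (htpn_dense : Dense (Submodule.span ℂ (Set.range tpn) : Set Hn))
    (Un : Equiv.Perm (Fin n) → (Hn →L[ℂ] Hn))
    (hUn : ∀ (π : Equiv.Perm (Fin n)) (x : Fin n → H),
      Un π (tpn x) = tpn (fun i => x (π⁻¹ i)))
    (S : Hn →L[ℂ] Hn)
    (hS : S = ∑ π : Equiv.Perm (Fin n), ((Equiv.Perm.sign π : ℤ) : ℂ) • Un π)
    -- the Slater determinant and the projector onto its span
    (e : Fin N → H) (he : Orthonormal ℂ e)
    (Ψ : HN)
    (hΨ : Ψ = ((Real.sqrt N.factorial : ℝ) : ℂ)⁻¹ •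
      ∑ π : Equiv.Perm (Fin N),
        ((Equiv.Perm.sign π : ℤ) : ℂ) • tpN (fun i => e (π⁻¹ i)))
    (PΨ : HN →L[ℂ] HN) (hPΨ : ∀ φ : HN, PΨ φ = ⟪Ψ, φ⟫ • Ψ)
    -- the partial trace down to H^{⊗n}
    (mixn : Hn → (Fin (N - n) → J) → HN)
    (hmixn_tp : ∀ (y : Fin n → H) (z : Fin (N - n) → J),
      mixn (tpn y) z =
        tpN (fun i => Fin.append y (fun t => b (z t)) (Fin.cast (by omega) i)))
    (ptrn : (HN →L[ℂ] HN) → (Hn →L[ℂ] Hn))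
    (hptrn : ∀ w x : Hn,
      HasSum (fun z : Fin (N - n) → J => ⟪PΨ (mixn w z), mixn x z⟫)
        ⟪ptrn PΨ w, x⟫)
    -- the partial trace down to H (the one-body marginal)
    (mix1 : H → (Fin (N - 1) → J) → HN)
    (hmix1_tp : ∀ (h : H) (z : Fin (N - 1) → J),
      mix1 h z =
        tpN (fun i => Fin.cons (α := fun _ => H) h (fun t => b (z t)) (Fin.cast (by omega) i)))
    (ptr1 : (HN →L[ℂ] HN) → (H →L[ℂ] H))
    (hptr1 : ∀ w x : H,
      HasSum (fun z : Fin (N - 1) → J => ⟪PΨ (mix1 w z), mix1 x z⟫)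
        ⟪ptr1 PΨ w, x⟫)
    -- the n-th tensor power of the one-body marginal
    (Dn : Hn →L[ℂ] Hn)
    (hDn : ∀ x : Fin n → H, Dn (tpn x) = tpn (fun i => ptr1 PΨ (x i))) :
    ptrn PΨ = (((N : ℂ) ^ n * ((N - n).factorial : ℂ)) / (N.factorial : ℂ)) •
      (Dn ∘L S) := by
  subst hΨ
  have hptrn_tp : ∀ y x : Fin n → H, ⟪ptrn PΨ (tpn y), tpn x⟫ =
      ((N - n).factorial / N.factorial : ℂ) * ((crossGram e y)ᴴ * crossGram e x).det :=
    fun y x => (hptrn (tpn y) (tpn x)).unique <| by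
      simpa only [hmixn_tp] using
        hasSum_inner_slaterProjector_append htpN_inner he hPΨ b (by omega) y x
  have hptr1_apply : ∀ w x : H, ⟪ptr1 PΨ w, x⟫ = (N : ℂ)⁻¹ * ∑ k, ⟪w, e k⟫ * ⟪e k, x⟫ :=
    fun w x => (hptr1 w x).unique <| by
      simpa only [hmix1_tp] using
        hasSum_inner_slaterProjector_cons htpN_inner he hPΨ b (by omega) w x
  refine ContinuousLinearMap.ext_inner_of_dense_span htpn_dense ?_
  rintro _ ⟨y, rfl⟩ _ ⟨x, rfl⟩
  have hkernel : (Matrix.of fun i j => ⟪ptr1 PΨ (y i), x j⟫) =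
      (N : ℂ)⁻¹ • ((crossGram e y)ᴴ * crossGram e x) := by
    ext i j
    simp [Matrix.mul_apply, hptr1_apply]
  rw [hptrn_tp, smul_apply, inner_smul_left, inner_comp_antisymmetrizer_tp htpn_inner hUn hS hDn,
    hkernel, Matrix.det_smul, Fintype.card_fin]
  have hN₀ : (N : ℂ) ≠ 0 := by exact_mod_cast (by omega : N ≠ 0)
  simp only [map_div₀, map_mul, map_pow, map_natCast, inv_pow]
  field_simp
end
end

section
/- If T is a trace class operator on H^{⊗N} satisfying T U_π = U_π T = sgn(π) T for all permutations π ∈ Π_N (fermionic symmetry), then for every n < N the partial trace T_{:n} on H^{⊗n} satisfies T_{:n} U_σ = U_σ T_{:n} = sgn(σ) T_{:n} for all σ ∈ Π_n. -/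
/-!
Extending `σ ∈ Π_n` by the identity on the last `N − n` factors gives `π ∈ Π_N` with
`sgn π = sgn σ` and `U_π (w ⊗ b_z) = (U_σ w) ⊗ b_z`, where `w ⊗ b_z` is `mixn w z`: both sides are
continuous linear in `w` (`w ↦ w ⊗ b_z` preserves inner products, hence is a linear isometry) and
they agree on product vectors. So every term of the series for `⟨T_{:n} U_σ w, x⟩` is `sgn σ`
times the corresponding term for `⟨T_{:n} w, x⟩`. For `U_σ T_{:n}`, move `U_σ` to the other side
of the inner product as `U_{σ⁻¹}`, and then back on the `N`-fold side as `U_π`.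
-/

noncomputable section

open scoped ENNReal
open ContinuousLinearMap

local notation "⟪" x ", " y "⟫" => @inner ℂ _ _ x y

noncomputable def traceNorm {H : Type*} [NormedAddCommGroup H]
    [InnerProductSpace ℂ H] (T : H →L[ℂ] H) : ℝ≥0∞ :=
  ⨆ (n : ℕ) (e : Fin n → H) (f : Fin n → H) (_ : Orthonormal ℂ e)
    (_ : Orthonormal ℂ f), ∑ i, (‖⟪T (e i), f i⟫‖₊ : ℝ≥0∞)

namespace Equiv.Perm

variable {m k N : ℕ} (h : m + k = N)

def finExtend : Perm (Fin m) →* Perm (Fin N) :=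
  (finSumFinEquiv.trans (finCongr h)).permCongrHom.toMonoidHom.comp
    ((sumCongrHom (Fin m) (Fin k)).comp (MonoidHom.inl _ _))

theorem sign_finExtend (σ : Perm (Fin m)) : sign (finExtend h σ) = sign σ := by
  simp [finExtend, sign_permCongr, sign_sumCongr]

theorem finExtend_apply (σ : Perm (Fin m)) (s : Fin m ⊕ Fin k) :
    finExtend h σ (Fin.cast h (finSumFinEquiv s)) =
      Fin.cast h (finSumFinEquiv (Sum.map σ id s)) := by
  simp [finExtend, Equiv.permCongr_apply]

theorem append_cast_finExtend_inv {α : Type*} (σ : Perm (Fin m))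
    (y : Fin m → α) (c : Fin k → α) (i : Fin N) :
    Fin.append y c (Fin.cast h.symm ((finExtend h σ)⁻¹ i)) =
      Fin.append (fun j => y (σ⁻¹ j)) c (Fin.cast h.symm i) := by
  obtain ⟨s, rfl⟩ := (finSumFinEquiv.trans (finCongr h)).surjective i
  rw [← map_inv (finExtend h) σ]
  simp only [Equiv.trans_apply, finCongr_apply, finExtend_apply, Fin.cast_cast, Fin.cast_eq_self]
  rcases s with j | j <;> simp

end Equiv.Perm

section InnerProductSpace

variable {𝕜 H E F : Type*} [RCLike 𝕜] [NormedAddCommGroup H] [InnerProductSpace 𝕜 H]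
  [NormedAddCommGroup E] [InnerProductSpace 𝕜 E] [NormedAddCommGroup F] [InnerProductSpace 𝕜 F]

theorem map_add_of_inner_map_map {f : E → F} (hf : ∀ x y, inner 𝕜 (f x) (f y) = inner 𝕜 x y)
    (x y : E) : f (x + y) = f x + f y := by
  rw [← sub_eq_zero, ← inner_self_eq_zero (𝕜 := 𝕜)]
  simp only [inner_sub_left, inner_sub_right, inner_add_left, inner_add_right, hf]
  ring

theorem map_smul_of_inner_map_map {f : E → F} (hf : ∀ x y, inner 𝕜 (f x) (f y) = inner 𝕜 x y)
    (c : 𝕜) (x : E) : f (c • x) = c • f x := by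
  rw [← sub_eq_zero, ← inner_self_eq_zero (𝕜 := 𝕜)]
  simp only [inner_sub_left, inner_sub_right, inner_smul_left, inner_smul_right, hf]
  ring

def LinearIsometry.ofInnerMapMap (f : E → F) (hf : ∀ x y, inner 𝕜 (f x) (f y) = inner 𝕜 x y) :
    E →ₗᵢ[𝕜] F :=
  LinearMap.isometryOfInner
    { toFun := f
      map_add' := map_add_of_inner_map_map hf
      map_smul' := map_smul_of_inner_map_map hf } hf

@[simp]
theorem LinearIsometry.coe_ofInnerMapMap (f : E → F)
    (hf : ∀ x y, inner 𝕜 (f x) (f y) = inner 𝕜 x y) : ⇑(LinearIsometry.ofInnerMapMap f hf) = f :=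
  rfl

theorem inner_map_eq_inner_map_of_dense_span {ι : Type*} {v : ι → E}
    (hv : Dense (Submodule.span 𝕜 (Set.range v) : Set E)) {A B : E →L[𝕜] E}
    (h : ∀ i j, inner 𝕜 (A (v i)) (v j) = inner 𝕜 (v i) (B (v j))) (x y : E) :
    inner 𝕜 (A x) y = inner 𝕜 x (B y) := by
  have hright : ∀ i, innerSL 𝕜 (A (v i)) = innerSL 𝕜 (v i) ∘L B := fun i =>
    ContinuousLinearMap.ext_on hv (by rintro _ ⟨j, rfl⟩; exact h i j)
  have hleft : innerSL 𝕜 y ∘L A = innerSL 𝕜 (B y) := by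
    refine ContinuousLinearMap.ext_on hv ?_
    rintro _ ⟨i, rfl⟩
    have := congrArg (fun L => L y) (hright i)
    simp only [innerSL_apply_apply, comp_apply] at this ⊢
    rw [← inner_conj_symm, this, inner_conj_symm]
  have := congrArg (fun L => L x) hleft
  simp only [innerSL_apply_apply, comp_apply] at this
  rw [← inner_conj_symm, this, inner_conj_symm]

theorem inner_perm_apply_eq_inner_apply_perm_inv {ι : Type*} [Fintype ι] {tp : (ι → H) → E}
    (htp_inner : ∀ x y, inner 𝕜 (tp x) (tp y) = ∏ i, inner 𝕜 (x i) (y i))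
    (htp_dense : Dense (Submodule.span 𝕜 (Set.range tp) : Set E))
    {U : Equiv.Perm ι → (E →L[𝕜] E)} (hU : ∀ π x, U π (tp x) = tp (fun i => x (π⁻¹ i)))
    (π : Equiv.Perm ι) (u v : E) : inner 𝕜 (U π u) v = inner 𝕜 u (U π⁻¹ v) := by
  refine inner_map_eq_inner_map_of_dense_span htp_dense (fun x y => ?_) u v
  rw [hU, hU, htp_inner, htp_inner]
  exact Fintype.prod_equiv π⁻¹ _ _ fun i => by simp

theorem perm_finExtend_map_eq_map_perm {α : Type*} {n k N : ℕ} (h : n + k = N)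
    {tpn : (Fin n → α) → E} (htpn_dense : Dense (Submodule.span 𝕜 (Set.range tpn) : Set E))
    {Un : Equiv.Perm (Fin n) → (E →L[𝕜] E)} (hUn : ∀ σ x, Un σ (tpn x) = tpn (fun i => x (σ⁻¹ i)))
    {tpN : (Fin N → α) → F}
    {UN : Equiv.Perm (Fin N) → (F →L[𝕜] F)} (hUN : ∀ π x, UN π (tpN x) = tpN (fun i => x (π⁻¹ i)))
    {M : E → F} (hM_inner : ∀ w x, inner 𝕜 (M w) (M x) = inner 𝕜 w x) (c : Fin k → α)
    (hM_tp : ∀ y, M (tpn y) = tpN (fun i => Fin.append y c (Fin.cast h.symm i)))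
    (σ : Equiv.Perm (Fin n)) (w : E) : UN (Equiv.Perm.finExtend h σ) (M w) = M (Un σ w) := by
  let L := (LinearIsometry.ofInnerMapMap M hM_inner).toContinuousLinearMap
  suffices UN (Equiv.Perm.finExtend h σ) ∘L L = L ∘L Un σ from congrArg (fun A => A w) this
  refine ContinuousLinearMap.ext_on htpn_dense ?_
  rintro _ ⟨y, rfl⟩
  simp only [comp_apply, L, LinearIsometry.coe_toContinuousLinearMap,
    LinearIsometry.coe_ofInnerMapMap, hUn, hM_tp, hUN, Equiv.Perm.append_cast_finExtend_inv]

end InnerProductSpace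

theorem partial_trace_preserves_fermionic_symmetry
    {H Hn HN : Type*}
    [NormedAddCommGroup H] [InnerProductSpace ℂ H]
    [NormedAddCommGroup Hn] [InnerProductSpace ℂ Hn]
    [NormedAddCommGroup HN] [InnerProductSpace ℂ HN]
    (n N : ℕ) (hnN : n < N)
    {J : Type} (b : HilbertBasis J ℂ H)
    (tpN : (Fin N → H) → HN)
    (htpN_inner : ∀ x y : Fin N → H, ⟪tpN x, tpN y⟫ = ∏ i, ⟪x i, y i⟫)
    (htpN_dense : Dense (Submodule.span ℂ (Set.range tpN) : Set HN))
    (UN : Equiv.Perm (Fin N) → (HN →L[ℂ] HN))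
    (hUN : ∀ (π : Equiv.Perm (Fin N)) (x : Fin N → H),
      UN π (tpN x) = tpN (fun i => x (π⁻¹ i)))
    (tpn : (Fin n → H) → Hn)
    (htpn_inner : ∀ x y : Fin n → H, ⟪tpn x, tpn y⟫ = ∏ i, ⟪x i, y i⟫)
    (htpn_dense : Dense (Submodule.span ℂ (Set.range tpn) : Set Hn))
    (Un : Equiv.Perm (Fin n) → (Hn →L[ℂ] Hn))
    (hUn : ∀ (σ : Equiv.Perm (Fin n)) (x : Fin n → H),
      Un σ (tpn x) = tpn (fun i => x (σ⁻¹ i)))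
    -- the partial trace over the last N − n factors
    (mixn : Hn → (Fin (N - n) → J) → HN)
    (hmixn_tp : ∀ (y : Fin n → H) (z : Fin (N - n) → J),
      mixn (tpn y) z =
        tpN (fun i => Fin.append y (fun t => b (z t)) (Fin.cast (by omega) i)))
    (hmixn_inner : ∀ (w x : Hn) (z z' : Fin (N - n) → J),
      ⟪mixn w z, mixn x z'⟫ = ⟪w, x⟫ * ∏ t, ⟪(b (z t) : H), b (z' t)⟫)
    (ptr : (HN →L[ℂ] HN) → (Hn →L[ℂ] Hn))
    (hptr : ∀ T : HN →L[ℂ] HN, traceNorm T ≠ ⊤ → ∀ w x : Hn,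
      HasSum (fun z : Fin (N - n) → J => ⟪T (mixn w z), mixn x z⟫)
        ⟪ptr T w, x⟫)
    -- T is trace class with fermionic symmetry
    (T : HN →L[ℂ] HN) (hTtc : traceNorm T ≠ ⊤)
    (hTsym : ∀ π : Equiv.Perm (Fin N),
      T ∘L UN π = ((Equiv.Perm.sign π : ℤ) : ℂ) • T ∧
      UN π ∘L T = ((Equiv.Perm.sign π : ℤ) : ℂ) • T) :
    ∀ σ : Equiv.Perm (Fin n),
      ptr T ∘L Un σ = ((Equiv.Perm.sign σ : ℤ) : ℂ) • ptr T ∧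
      Un σ ∘L ptr T = ((Equiv.Perm.sign σ : ℤ) : ℂ) • ptr T := by
  intro σ
  have h : n + (N - n) = N := by omega
  set π := Equiv.Perm.finExtend h σ
  set s : ℂ := ((Equiv.Perm.sign σ : ℤ) : ℂ)
  have hπ : ((Equiv.Perm.sign π : ℤ) : ℂ) = s := by rw [Equiv.Perm.sign_finExtend]
  have hmix : ∀ (ρ : Equiv.Perm (Fin n)) z w,
      UN (Equiv.Perm.finExtend h ρ) (mixn w z) = mixn (Un ρ w) z := fun ρ z =>
    perm_finExtend_map_eq_map_perm h htpn_dense hUn hUN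
      (fun w x => by simp [hmixn_inner, b.orthonormal.1]) _ (hmixn_tp · z) ρ
  have hs : starRingEnd ℂ s = s := map_intCast _ _
  have hUn_adj := inner_perm_apply_eq_inner_apply_perm_inv htpn_inner htpn_dense hUn σ
  have hUN_adj := inner_perm_apply_eq_inner_apply_perm_inv htpN_inner htpN_dense hUN π
  have hright : ∀ w x z, ⟪T (mixn (Un σ w) z), mixn x z⟫ = s * ⟪T (mixn w z), mixn x z⟫ := by
    intro w x z
    rw [← hmix, ← comp_apply T, (hTsym π).1, hπ, smul_apply, inner_smul_left, hs]
  have hleft : ∀ w x z, ⟪T (mixn w z), mixn (Un σ⁻¹ x) z⟫ = s * ⟪T (mixn w z), mixn x z⟫ := by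
    intro w x z
    rw [← hmix, map_inv, ← hUN_adj, ← comp_apply (UN π), (hTsym π).2, hπ, smul_apply,
      inner_smul_left, hs]
  constructor
  · ext w : 1
    refine ext_inner_right ℂ fun x => ?_
    rw [comp_apply, smul_apply, inner_smul_left, hs]
    exact (hptr T hTtc _ x).unique (by simpa only [hright] using (hptr T hTtc w x).mul_left s)
  · ext w : 1
    refine ext_inner_right ℂ fun x => ?_
    rw [comp_apply, smul_apply, inner_smul_left, hs, hUn_adj]
    exact (hptr T hTtc w _).unique (by simpa only [hleft] using (hptr T hTtc w x).mul_left s)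
end
end
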